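/- Suppose Assumption (A) holds. Then the parameters satisfy |a^L_1 + α| ≤ r(n−1); |a^L_i| ≤ binom(n−1, i−1)·(α + (n−i)r/i)·r^{i−1} for all i = 2,…,n−1; |a^L_n| ≤ α r^{n−1}; and likewise |a^R_1 − β| ≤ r(n−1); |a^R_i| ≤ binom(n−1, i−1)·(β + (n−i)r/i)·r^{i−1} for all i = 2,…,n−1; |a^R_n| ≤ β r^{n−1}. -/

import Mathlib

open Matrix Polynomial Finset

noncomputable section

/-- The companion-type matrix of the `n`-dimensional border-collision normal form:
`(i,1)` entry is `-a i`, `(i,i+1)` entries are `1`, all other entries `0`. -/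
def bcMat (n : ℕ) (a : Fin n → ℝ) : Matrix (Fin n) (Fin n) ℝ :=
  Matrix.of fun i j =>
    (if (j : ℕ) = 0 then -a i else 0) + (if (j : ℕ) = (i : ℕ) + 1 then 1 else 0)

/-- The vector `b = (1,0,…,0)`. -/
def bcVec (n : ℕ) : Fin n → ℝ := fun i => if (i : ℕ) = 0 then 1 else 0

/-- `ρ` is an eigenvalue of `M` (of algebraic multiplicity one, automatic when `|ρ| > r`)
and all remaining eigenvalues of `M` over `ℂ`, counted with multiplicity,
have modulus at most `r`. -/
def specA (n : ℕ) (M : Matrix (Fin n) (Fin n) ℝ) (ρ r : ℝ) : Prop :=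
  ∃ lam : Fin (n - 1) → ℂ,
    (∀ j, ‖lam j‖ ≤ r) ∧
      M.charpoly.map (algebraMap ℝ ℂ) =
        (X - C (ρ : ℂ)) * ∏ j : Fin (n - 1), (X - C (lam j))

/-- Assumption (A). -/
def assumptionA (n : ℕ) (aL aR : Fin n → ℝ) (α β r : ℝ) : Prop :=
  1 < α ∧ 1 < β ∧ 0 < r ∧ r < 1 ∧
    specA n (bcMat n aL) α r ∧ specA n (bcMat n aR) (-β) r

/-- The border-collision normal form map `f`. -/
def bcf (n : ℕ) (aL aR : Fin n → ℝ) (x : Fin n → ℝ) : Fin n → ℝ :=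
  if ∀ i : Fin n, (i : ℕ) = 0 → x i ≤ 0 then (bcMat n aL).mulVec x + bcVec n
  else (bcMat n aR).mulVec x + bcVec n

/-- The fixed point `Y = (I − A_L)⁻¹ b`. -/
def Ypt (n : ℕ) (aL : Fin n → ℝ) : Fin n → ℝ :=
  ((1 - bcMat n aL)⁻¹).mulVec (bcVec n)

/-- The row vector `u = (α^{n-1}, …, α, 1)`. -/
def uvec (n : ℕ) (α : ℝ) : Fin n → ℝ := fun i => α ^ (n - 1 - (i : ℕ))

/-- The hyperplane `E = {x : uᵀ(x − Y) = 0}`. -/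
def Eset (n : ℕ) (aL : Fin n → ℝ) (α : ℝ) : Set (Fin n → ℝ) :=
  {x | ∑ i : Fin n, uvec n α i * (x i - Ypt n aL i) = 0}

/-- The slab `H = {x : |x_i| ≤ M_i r^{i-1}, i = 2,…,n}` with
`M_i = (2α/(α−1))·binom(n−1,i−1)`. -/
def Hset (n : ℕ) (α r : ℝ) : Set (Fin n → ℝ) :=
  {x | ∀ i : Fin n, 1 ≤ (i : ℕ) →
    |x i| ≤ 2 * α / (α - 1) * ((n - 1).choose (i : ℕ) : ℝ) * r ^ (i : ℕ)}

/-- The first component `C₁` of the point `C`. -/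
def Cfirst (n : ℕ) (aL aR : Fin n → ℝ) (α : ℝ) : ℝ :=
  (1 - 1 / (1 - bcMat n aL).det +
      1 / (1 - bcMat n aL).det *
        ∑ k ∈ univ.filter (fun k : Fin n => 1 ≤ (k : ℕ)),
          α ^ (-((k : ℕ) : ℤ)) *
            ∑ j ∈ univ.filter (fun j : Fin n => (k : ℕ) ≤ (j : ℕ)), aL j) /
    ∑ i : Fin n, α ^ (-((i : ℕ) : ℤ)) * aR i

/-- The point `C = (C₁, 0, …, 0)`. -/
def Cpt (n : ℕ) (aL aR : Fin n → ℝ) (α : ℝ) : Fin n → ℝ :=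
  fun i => if (i : ℕ) = 0 then Cfirst n aL aR α else 0

/-- The polytope `Ω = Conv({C} ∪ (E ∩ H))`. -/
def OmegaSet (n : ℕ) (aL aR : Fin n → ℝ) (α r : ℝ) : Set (Fin n → ℝ) :=
  convexHull ℝ ({Cpt n aL aR α} ∪ (Eset n aL α ∩ Hset n α r))

/-- The cone `Ψ` of scalar multiples of vectors `(1, m₁, …, m_{n-1})` with
`|m_i| ≤ N_i r^{i-1}`, `N_i = ((min(α,β)−1)/2)·binom(n−1,i−1)`. -/
def PsiSet (n : ℕ) (α β r : ℝ) : Set (Fin n → ℝ) :=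
  {x | ∃ γ : ℝ, ∃ v : Fin n → ℝ,
    (∀ i : Fin n, (i : ℕ) = 0 → v i = 1) ∧
    (∀ i : Fin n, 1 ≤ (i : ℕ) →
      |v i| ≤ (min α β - 1) / 2 * ((n - 1).choose ((i : ℕ) - 1) : ℝ) * r ^ ((i : ℕ) - 1)) ∧
    x = γ • v}

/-- `P` is the vertex `P^(s)`: the point of `E` whose `i`-th component, `i = 2,…,n`,
is `s_{i-1}·M_i r^{i-1}`. -/
def isVertexP (n : ℕ) (aL : Fin n → ℝ) (α r : ℝ) (s : Fin (n - 1) → ℝ)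
    (P : Fin n → ℝ) : Prop :=
  P ∈ Eset n aL α ∧
    ∀ i : Fin n, ∀ _h : 1 ≤ (i : ℕ),
      P i = s ⟨(i : ℕ) - 1, by have := i.isLt; omega⟩ *
        (2 * α / (α - 1) * ((n - 1).choose (i : ℕ) : ℝ) * r ^ (i : ℕ))

/-- The `k`-th elementary symmetric polynomial of `η`. -/
def esym {m : ℕ} (η : Fin m → ℂ) (k : ℕ) : ℂ :=
  ∑ t ∈ powersetCard k univ, ∏ j ∈ t, η j

end

/-!
Expanding `det (X - bcMat n a)` along its last row gives the characteristic polynomial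
`X ^ n + ∑ aᵢ X ^ (n - 1 - i)`. Assumption (A) factors it over `ℂ` as `(X - ρ) Q` with `Q` monic
of degree `n - 1` and all roots in the closed disc of radius `r`, so by Vieta the coefficient
`q_k` of `X ^ (n - 1 - k)` in `Q` satisfies `‖q_k‖ ≤ C(n-1, k) rᵏ`. Comparing coefficients,
`a₀ + ρ = q₁`, `aₖ = q_{k+1} - ρ q_k` and `a_{n-1} = -ρ q_{n-1}`; take `ρ = α` and `ρ = -β`.
-/

section
variable {R : Type*} [CommRing R]

def bcCharmatrix (n : ℕ) (b : Fin n → R) (x : R) : Matrix (Fin n) (Fin n) R :=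
  of fun i j =>
    (if (j : ℕ) = 0 then b i else 0) + (if (j : ℕ) = i + 1 then -1 else 0) +
      (if i = j then x else 0)

theorem det_bcCharmatrix_submatrix_castSucc_succ (n : ℕ) (b : Fin (n + 1) → R) (x : R) :
    ((bcCharmatrix (n + 1) b x).submatrix Fin.castSucc Fin.succ).det = (-1) ^ n := by
  have hentry : ∀ i j : Fin n, (bcCharmatrix (n + 1) b x).submatrix Fin.castSucc Fin.succ i j =
      (if (j : ℕ) = i then -1 else 0) + (if (i : ℕ) = j + 1 then x else 0) := by
    intro i j
    simp only [submatrix_apply, bcCharmatrix, of_apply, Fin.val_succ, Fin.val_castSucc,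
      Fin.ext_iff, Nat.add_right_cancel_iff, Nat.succ_ne_zero, if_false, zero_add]
  have htri : ((bcCharmatrix (n + 1) b x).submatrix Fin.castSucc Fin.succ).BlockTriangular
      OrderDual.toDual := by
    intro i j hij
    have : (i : ℕ) < j := hij
    rw [hentry, if_neg (by omega), if_neg (by omega), add_zero]
  rw [det_of_isLowerTriangular _ htri, Finset.prod_congr rfl fun i _ => hentry i i]
  simp

theorem bcCharmatrix_submatrix_castSucc_castSucc (n : ℕ) (b : Fin (n + 1) → R) (x : R) :
    (bcCharmatrix (n + 1) b x).submatrix Fin.castSucc Fin.castSucc =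
      bcCharmatrix n (fun i => b i.castSucc) x := by
  ext i j
  simp only [submatrix_apply, bcCharmatrix, of_apply, Fin.val_castSucc, Fin.castSucc_inj]

theorem det_bcCharmatrix (n : ℕ) (b : Fin n → R) (x : R) :
    (bcCharmatrix n b x).det = x ^ n + ∑ i, b i * x ^ (n - 1 - i) := by
  induction n with
  | zero => simp
  | succ n ih =>
    rcases n with _ | m
    · simp [bcCharmatrix, det_unique]; ring
    have hentry : ∀ j : Fin (m + 2), bcCharmatrix (m + 2) b x (Fin.last _) j =
        (if j = 0 then b (Fin.last _) else 0) + (if j = Fin.last _ then x else 0) := by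
      intro j
      have : (j : ℕ) ≠ m + 2 := j.isLt.ne
      simp only [bcCharmatrix, of_apply, Fin.val_last, if_neg this, add_zero, eq_comm,
        Fin.ext_iff, Fin.val_zero]
    rw [det_succ_row _ (Fin.last _)]
    simp only [hentry, mul_add, add_mul, mul_ite, ite_mul, mul_zero, zero_mul,
      Finset.sum_add_distrib, Finset.sum_ite_eq', Finset.mem_univ, if_true, Fin.succAbove_zero,
      Fin.succAbove_last, det_bcCharmatrix_submatrix_castSucc_succ,
      bcCharmatrix_submatrix_castSucc_castSucc, ih, Fin.val_last, Fin.val_zero, add_zero]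
    have hpow : ∀ i : Fin (m + 1), x * (b i.castSucc * x ^ (m + 1 - 1 - i)) =
        b i.castSucc * x ^ (m + 1 + 1 - 1 - i.castSucc) := by
      intro i
      rw [mul_left_comm, ← pow_succ', Fin.val_castSucc]
      congr 2
      omega
    have hsign : (-1 : R) ^ (m + 1 + (m + 1)) = 1 := Even.neg_one_pow ⟨_, rfl⟩
    rw [hsign, one_mul, Finset.mul_sum, Finset.sum_congr rfl fun i _ => hpow i,
      Fin.sum_univ_castSucc (f := fun i : Fin (m + 2) => b i * x ^ (m + 1 + 1 - 1 - i))]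
    simp only [Fin.val_last, Nat.add_sub_cancel, Nat.sub_self, pow_zero]
    linear_combination b (Fin.last _) * hsign

end

theorem charmatrix_bcMat (n : ℕ) (a : Fin n → ℝ) :
    charmatrix (bcMat n a) = bcCharmatrix n (fun i => C (a i)) X := by
  ext i j : 1
  simp only [charmatrix_apply, bcMat, bcCharmatrix, of_apply, diagonal_apply]
  split_ifs <;> simp_all [Fin.ext_iff, add_comm]

theorem charpoly_bcMat (n : ℕ) (a : Fin n → ℝ) :
    (bcMat n a).charpoly = X ^ n + ∑ i, C (a i) * X ^ (n - 1 - i) := by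
  rw [Matrix.charpoly, charmatrix_bcMat, det_bcCharmatrix]

theorem coeff_charpoly_bcMat {n : ℕ} (a : Fin n → ℝ) (i : Fin n) :
    (bcMat n a).charpoly.coeff (n - 1 - i) = a i := by
  have hi := i.isLt
  rw [charpoly_bcMat, coeff_add, coeff_X_pow, if_neg (by omega), zero_add, finsetSum_coeff,
    Finset.sum_eq_single i]
  · simp
  · intro j _ hji
    rw [coeff_C_mul_X_pow, if_neg]
    have := j.isLt
    omega
  · simp

theorem norm_coeff_prod_X_sub_C_le {m : ℕ} (μ : Fin m → ℂ) {r : ℝ} (hμ : ∀ j, ‖μ j‖ ≤ r)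
    {k : ℕ} (hk : k ≤ m) :
    ‖(∏ j, (X - C (μ j))).coeff (m - k)‖ ≤ m.choose k * r ^ k := by
  set Q : ℂ[X] := ∏ j, (X - C (μ j))
  have hmonic : Q.Monic := monic_prod_X_sub_C μ univ
  have hdeg : Q.natDegree = m := by simp [Q, natDegree_prod_of_monic, monic_X_sub_C]
  have hroots : ∀ z ∈ Q.roots, ‖z‖ ≤ r := by
    rw [roots_prod _ _ hmonic.ne_zero]
    simp only [roots_X_sub_C, Multiset.mem_bind, Multiset.mem_singleton]
    rintro z ⟨j, -, rfl⟩
    exact hμ j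
  have hbound := coeff_le_of_roots_le (f := RingHom.id ℂ) (m - k) hmonic
    (by rw [Polynomial.map_id]; exact Splits.prod fun j _ => Splits.X_sub_C (μ j))
    (by rwa [Polynomial.map_id])
  rw [Polynomial.map_id, hdeg, Nat.sub_sub_self hk, Nat.choose_symm hk] at hbound
  exact hbound.trans_eq (mul_comm _ _)

theorem Nat.cast_choose_succ_right (m k : ℕ) (hk : k < m) :
    ((m.choose (k + 1) : ℕ) : ℝ) = m.choose k * ((m : ℝ) - k) / (k + 1) := by
  rw [eq_div_iff (by positivity), ← Nat.cast_sub hk.le]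
  exact_mod_cast Nat.choose_succ_right_eq m k

section Bounds

variable {n : ℕ} {a : Fin n → ℝ} {ρ r : ℝ} {μ : Fin (n - 1) → ℂ}

theorem ofReal_bcMat_param_eq_coeff
    (hfac : (bcMat n a).charpoly.map (algebraMap ℝ ℂ) = (X - C (ρ : ℂ)) * ∏ j, (X - C (μ j)))
    (i : Fin n) : (a i : ℂ) = ((X - C (ρ : ℂ)) * ∏ j, (X - C (μ j))).coeff (n - 1 - i) := by
  rw [← hfac, coeff_map, coeff_charpoly_bcMat]
  rfl

theorem abs_bcMat_param_zero_add_le (hn : 2 ≤ n) (hμ : ∀ j, ‖μ j‖ ≤ r)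
    (hfac : (bcMat n a).charpoly.map (algebraMap ℝ ℂ) = (X - C (ρ : ℂ)) * ∏ j, (X - C (μ j)))
    (i : Fin n) (hi : (i : ℕ) = 0) :
    |a i + ρ| ≤ r * ((n : ℝ) - 1) := by
  set Q : ℂ[X] := ∏ j, (X - C (μ j))
  have hlead : Q.coeff (n - 1 - 0) = 1 := by
    simpa [Q, natDegree_prod_of_monic, monic_X_sub_C] using
      (monic_prod_X_sub_C μ univ).coeff_natDegree
  have hsum : ((a i + ρ : ℝ) : ℂ) = Q.coeff (n - 1 - 1) := by
    rw [Complex.ofReal_add, ofReal_bcMat_param_eq_coeff hfac,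
      show n - 1 - (i : ℕ) = n - 1 - 1 + 1 by omega, coeff_X_sub_C_mul,
      show n - 1 - 1 + 1 = n - 1 - 0 by omega, hlead]
    ring
  have hbound := norm_coeff_prod_X_sub_C_le μ hμ (k := 1) (by omega)
  rw [← hsum, Complex.norm_real, Real.norm_eq_abs, Nat.choose_one_right, pow_one,
    Nat.cast_sub (by omega), Nat.cast_one] at hbound
  linarith

theorem abs_bcMat_param_le (hμ : ∀ j, ‖μ j‖ ≤ r)
    (hfac : (bcMat n a).charpoly.map (algebraMap ℝ ℂ) = (X - C (ρ : ℂ)) * ∏ j, (X - C (μ j)))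
    (i : Fin n) (hi : (i : ℕ) + 1 < n) :
    |a i| ≤ ((n - 1).choose (i : ℕ) : ℝ) *
      (|ρ| + ((n : ℝ) - (((i : ℕ) : ℝ) + 1)) * r / (((i : ℕ) : ℝ) + 1)) * r ^ (i : ℕ) := by
  set Q : ℂ[X] := ∏ j, (X - C (μ j))
  have hcoeff : (a i : ℂ) = Q.coeff (n - 1 - (i + 1)) - ρ * Q.coeff (n - 1 - i) := by
    rw [ofReal_bcMat_param_eq_coeff hfac, show n - 1 - (i : ℕ) = n - 1 - (i + 1) + 1 by omega,
      coeff_X_sub_C_mul, show n - 1 - (i + 1) + 1 = n - 1 - i by omega]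
  have hchoose := Nat.cast_choose_succ_right (n - 1) i (by omega)
  rw [Nat.cast_sub (by omega), Nat.cast_one] at hchoose
  calc |a i| = ‖Q.coeff (n - 1 - (i + 1)) - ρ * Q.coeff (n - 1 - i)‖ := by
        rw [← hcoeff, Complex.norm_real, Real.norm_eq_abs]
    _ ≤ ‖Q.coeff (n - 1 - (i + 1))‖ + |ρ| * ‖Q.coeff (n - 1 - i)‖ := by
        grw [norm_sub_le, norm_mul, Complex.norm_real, Real.norm_eq_abs]
    _ ≤ (n - 1).choose ((i : ℕ) + 1) * r ^ ((i : ℕ) + 1) +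
          |ρ| * ((n - 1).choose i * r ^ (i : ℕ)) := by
        grw [norm_coeff_prod_X_sub_C_le μ hμ (k := i + 1) (by omega),
          norm_coeff_prod_X_sub_C_le μ hμ (k := i) (by omega)]
    _ = _ := by rw [hchoose]; ring

theorem abs_bcMat_param_last_le (hμ : ∀ j, ‖μ j‖ ≤ r)
    (hfac : (bcMat n a).charpoly.map (algebraMap ℝ ℂ) = (X - C (ρ : ℂ)) * ∏ j, (X - C (μ j)))
    (i : Fin n) (hi : (i : ℕ) = n - 1) :
    |a i| ≤ |ρ| * r ^ (n - 1) := by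
  set Q : ℂ[X] := ∏ j, (X - C (μ j))
  have hcoeff : (a i : ℂ) = -ρ * Q.coeff (n - 1 - (n - 1)) := by
    rw [ofReal_bcMat_param_eq_coeff hfac, hi, Nat.sub_self, mul_coeff_zero, coeff_sub,
      coeff_X_zero, coeff_C_zero, zero_sub]
  calc |a i| = |ρ| * ‖Q.coeff (n - 1 - (n - 1))‖ := by
        rw [← Real.norm_eq_abs, ← Complex.norm_real, hcoeff, norm_mul, norm_neg,
          Complex.norm_real, Real.norm_eq_abs]
    _ ≤ |ρ| * ((n - 1).choose (n - 1) * r ^ (n - 1)) := by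
        grw [norm_coeff_prod_X_sub_C_le μ hμ le_rfl]
    _ = |ρ| * r ^ (n - 1) := by rw [Nat.choose_self, Nat.cast_one, one_mul]

end Bounds

/-- Under Assumption (A), the parameters satisfy the stated bounds
`|a^L_1 + α| ≤ r(n−1)`, `|a^L_i| ≤ binom(n−1,i−1)(α + (n−i)r/i) r^{i−1}` for `i = 2,…,n−1`,
`|a^L_n| ≤ α r^{n−1}`, and likewise for `a^R` with `β`. -/
theorem stmt_3 (n : ℕ) (hn : 2 ≤ n) (aL aR : Fin n → ℝ) (α β r : ℝ)
    (hA : assumptionA n aL aR α β r) :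
    |aL ⟨0, by omega⟩ + α| ≤ r * ((n : ℝ) - 1) ∧
    (∀ i : Fin n, 1 ≤ (i : ℕ) → (i : ℕ) ≤ n - 2 →
      |aL i| ≤ ((n - 1).choose (i : ℕ) : ℝ) *
        (α + ((n : ℝ) - (((i : ℕ) : ℝ) + 1)) * r / (((i : ℕ) : ℝ) + 1)) * r ^ (i : ℕ)) ∧
    |aL ⟨n - 1, by omega⟩| ≤ α * r ^ (n - 1) ∧
    |aR ⟨0, by omega⟩ - β| ≤ r * ((n : ℝ) - 1) ∧
    (∀ i : Fin n, 1 ≤ (i : ℕ) → (i : ℕ) ≤ n - 2 →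
      |aR i| ≤ ((n - 1).choose (i : ℕ) : ℝ) *
        (β + ((n : ℝ) - (((i : ℕ) : ℝ) + 1)) * r / (((i : ℕ) : ℝ) + 1)) * r ^ (i : ℕ)) ∧
    |aR ⟨n - 1, by omega⟩| ≤ β * r ^ (n - 1) := by
  obtain ⟨hα, hβ, -, -, ⟨μ, hμ, hL⟩, ⟨ν, hν, hR⟩⟩ := hA
  have habsα : |α| = α := abs_of_pos (by linarith)
  have habsβ : |-β| = β := by rw [abs_neg, abs_of_pos (by linarith)]
  refine ⟨abs_bcMat_param_zero_add_le hn hμ hL _ rfl, fun i _ hi => ?_, ?_,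
    sub_eq_add_neg (aR _) β ▸ abs_bcMat_param_zero_add_le hn hν hR _ rfl, fun i _ hi => ?_, ?_⟩
  · exact habsα ▸ abs_bcMat_param_le hμ hL i (by omega)
  · exact habsα ▸ abs_bcMat_param_last_le hμ hL _ rfl
  · exact habsβ ▸ abs_bcMat_param_le hν hR i (by omega)
  · exact habsβ ▸ abs_bcMat_param_last_le hν hR _ rfl
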